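/- arXiv:2501.10248 — 9 statements merged into one kernel-verified Lean document; each statement's English description precedes it below -/
import Mathlib

section
/- Let A be a real symmetric matrix with orthonormal eigenvectors u_i, u_j having distinct nonzero eigenvalues a_i ≠ a_j. Let z = c_i u_i + c_j u_j with c_i c_j ≠ 0 and ε = c_j/c_i. Define α(v) = ⟨v,Av⟩/⟨Av,Av⟩ and I₂(v) = (I − α(v)Aᵀ)(I − α(v)A). Then z is an eigenvector of the nonlinear eigenvalue problem I₂(z)z = λz with a non-unit eigenvalue λ if and only if a_i a_j > 0 and ε² = a_i/a_j; in that case λ = (a_j − a_i)²/(a_j + a_i)². -/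
open Matrix

theorem stmt2 {n : ℕ} (A : Matrix (Fin n) (Fin n) ℝ) (hA : A.IsSymm)
    (u v : Fin n → ℝ) (ai aj : ℝ)
    (hu : A.mulVec u = ai • u) (hv : A.mulVec v = aj • v)
    (huu : u ⬝ᵥ u = 1) (hvv : v ⬝ᵥ v = 1) (huv : u ⬝ᵥ v = 0)
    (hne : ai ≠ aj) (hai : ai ≠ 0) (haj : aj ≠ 0)
    (ci cj : ℝ) (hc : ci * cj ≠ 0)
    (z : Fin n → ℝ) (hz : z = ci • u + cj • v)
    (ε : ℝ) (hε : ε = cj / ci)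
    (αz : ℝ) (hαz : αz = z ⬝ᵥ A.mulVec z / (A.mulVec z ⬝ᵥ A.mulVec z))
    (I2 : Matrix (Fin n) (Fin n) ℝ)
    (hI2 : I2 = (1 - αz • Aᵀ) * (1 - αz • A)) :
    ((∃ lam : ℝ, lam ≠ 1 ∧ I2.mulVec z = lam • z) ↔ (ai * aj > 0 ∧ ε ^ 2 = ai / aj)) ∧
    (∀ lam : ℝ, lam ≠ 1 → I2.mulVec z = lam • z →
      lam = (aj - ai) ^ 2 / (aj + ai) ^ 2) := by
  have hAt : Aᵀ = A := hA
  have hci : ci ≠ 0 := fun h => hc (by simp [h])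
  have hcj : cj ≠ 0 := fun h => hc (by simp [h])
  have hAz : A.mulVec z = (ci*ai) • u + (cj*aj) • v := by
    rw [hz]
    simp [Matrix.mulVec_add, Matrix.mulVec_smul, hu, hv, smul_smul, mul_comm]
  have hvu : v ⬝ᵥ u = 0 := by rw [dotProduct_comm]; exact huv
  have hnum : z ⬝ᵥ A.mulVec z = ci^2*ai + cj^2*aj := by
    rw [hAz, hz]
    simp [dotProduct_add, add_dotProduct, dotProduct_smul, smul_dotProduct,
      huu, hvv, huv, hvu]
    ring
  have hden : A.mulVec z ⬝ᵥ A.mulVec z = ci^2*ai^2 + cj^2*aj^2 := by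
    rw [hAz]
    simp [dotProduct_add, add_dotProduct, dotProduct_smul, smul_dotProduct,
      huu, hvv, huv, hvu]
    ring
  have hdpos : (0:ℝ) < ci^2*ai^2 + cj^2*aj^2 := by positivity
  have hαval : αz * (ci^2*ai^2 + cj^2*aj^2) = ci^2*ai + cj^2*aj := by
    rw [hαz, hnum, hden]
    field_simp
  have hI2z : I2.mulVec z = (ci*(1-αz*ai)^2) • u + (cj*(1-αz*aj)^2) • v := by
    rw [hI2, hAt, ← Matrix.mulVec_mulVec, hz]
    simp only [Matrix.sub_mulVec, Matrix.one_mulVec, Matrix.smul_mulVec,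
      Matrix.mulVec_sub, Matrix.mulVec_add, Matrix.mulVec_smul, hu, hv]
    module
  have key : ∀ p q : ℝ, p • u + q • v = 0 → p = 0 ∧ q = 0 := by
    intro p q h
    constructor
    · have := congrArg (fun w => u ⬝ᵥ w) h
      simpa [dotProduct_add, dotProduct_smul, huu, huv] using this
    · have := congrArg (fun w => v ⬝ᵥ w) h
      simpa [dotProduct_add, dotProduct_smul, hvv, hvu] using this
  have eig : ∀ lam : ℝ, I2.mulVec z = lam • z ↔
      ((1-αz*ai)^2 = lam ∧ (1-αz*aj)^2 = lam) := by
    intro lam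
    constructor
    · intro h
      have hsub : I2.mulVec z - lam • z = 0 := sub_eq_zero.mpr h
      rw [hI2z, hz] at hsub
      have h0 : (ci*(1-αz*ai)^2 - lam*ci) • u + (cj*(1-αz*aj)^2 - lam*cj) • v = 0 := by
        rw [← hsub]; module
      obtain ⟨h1, h2⟩ := key _ _ h0
      constructor
      · have h' : ci * ((1-αz*ai)^2 - lam) = 0 := by linear_combination h1
        rcases mul_eq_zero.1 h' with h'' | h''
        · exact absurd h'' hci
        · linarith
      · have h' : cj * ((1-αz*aj)^2 - lam) = 0 := by linear_combination h2
        rcases mul_eq_zero.1 h' with h'' | h''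
        · exact absurd h'' hcj
        · linarith
    · rintro ⟨h1, h2⟩
      rw [hI2z, hz, h1, h2, smul_add, smul_smul, smul_smul]
      rw [mul_comm lam ci, mul_comm lam cj]
  have forward : ∀ lam : ℝ, lam ≠ 1 → I2.mulVec z = lam • z →
      αz * (ai + aj) = 2 := by
    intro lam hl1 h
    obtain ⟨h1, h2⟩ := (eig lam).1 h
    have hsq : (1-αz*ai)^2 = (1-αz*aj)^2 := by rw [h1, h2]
    have hfac : αz * (aj - ai) * (2 - αz*(ai+aj)) = 0 := by linear_combination hsq
    rcases mul_eq_zero.1 hfac with h' | h'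
    · rcases mul_eq_zero.1 h' with h'' | h''
      · exfalso; apply hl1; rw [← h1, h'']; ring
      · exfalso; exact hne (by linarith)
    · linarith
  constructor
  · constructor
    · rintro ⟨lam, hl1, h⟩
      have hkey : αz * (ai + aj) = 2 := forward lam hl1 h
      have hcc : ci^2 * ai = cj^2 * aj := by
        have h1 : (ci^2*ai + cj^2*aj) * (ai + aj) = 2 * (ci^2*ai^2 + cj^2*aj^2) := by
          have e : (ci^2*ai + cj^2*aj) * (ai + aj)
              = (αz*(ai+aj)) * (ci^2*ai^2 + cj^2*aj^2) := by
            rw [← hαval]; ring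
          rw [hkey] at e; linarith
        have h2 : (ai - aj) * (ci^2*ai - cj^2*aj) = 0 := by linear_combination -h1
        rcases mul_eq_zero.1 h2 with h' | h'
        · exact absurd (by linarith) hne
        · linarith
      refine ⟨?_, ?_⟩
      · have h1 : ci^2 * (ai*aj) = (cj*aj)^2 := by linear_combination aj * hcc
        have hc2 : (0:ℝ) < ci^2 := by positivity
        have hcja : cj*aj ≠ 0 := mul_ne_zero hcj haj
        have hq : (0:ℝ) < (cj*aj)^2 := by positivity
        nlinarith [h1, hc2, hq]
      · rw [hε, div_pow, div_eq_div_iff (pow_ne_zero 2 hci) haj]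
        linear_combination -hcc
    · rintro ⟨hpos, heps⟩
      rw [hε, div_pow, div_eq_div_iff (pow_ne_zero 2 hci) haj] at heps
      have hcc : cj^2 * aj = ci^2 * ai := by linear_combination heps
      have hsum : ai + aj ≠ 0 := by
        intro h
        have : aj = -ai := by linarith
        rw [this] at hpos
        nlinarith [sq_nonneg ai]
      have hsum' : aj + ai ≠ 0 := fun h => hsum (by linarith)
      have h2 : cj^2*aj^2 = ci^2*ai*aj := by linear_combination aj * hcc
      have h3 : αz * (ci^2*ai^2 + ci^2*ai*aj) = 2*(ci^2*ai) := by
        linear_combination hαval - αz * h2 + hcc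
      have hca : ci^2 * ai ≠ 0 := mul_ne_zero (pow_ne_zero 2 hci) hai
      have hαeq : αz * (ai + aj) = 2 := by
        have h4 : (ci^2*ai) * (αz*(ai+aj) - 2) = 0 := by linear_combination h3
        rcases mul_eq_zero.1 h4 with h' | h'
        · exact absurd h' hca
        · linarith
      refine ⟨(aj-ai)^2/(aj+ai)^2, ?_, ?_⟩
      · intro h
        rw [div_eq_one_iff_eq (pow_ne_zero 2 hsum')] at h
        nlinarith [hpos, h]
      · rw [eig]
        have e1 : 1 - αz*ai = (aj - ai)/(aj+ai) := by
          rw [eq_div_iff hsum']; linear_combination (-ai) * hαeq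
        have e2 : 1 - αz*aj = (ai - aj)/(aj+ai) := by
          rw [eq_div_iff hsum']; linear_combination (-aj) * hαeq
        constructor
        · rw [e1, div_pow]
        · rw [e2, div_pow]
          congr 1
          ring
  · intro lam hl1 h
    have hkey : αz * (ai + aj) = 2 := forward lam hl1 h
    have hsum' : aj + ai ≠ 0 := by
      intro h'
      have : ai + aj = 0 := by linarith
      rw [this, mul_zero] at hkey
      norm_num at hkey
    obtain ⟨h1, _⟩ := (eig lam).1 h
    rw [← h1]
    have e1 : 1 - αz*ai = (aj - ai)/(aj+ai) := by
      rw [eq_div_iff hsum']; linear_combination (-ai) * hkey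
    rw [e1, div_pow]
end

section
/- Let A be a symmetric positive definite real n×n matrix with largest and smallest eigenvalues λ_max and λ_min. For any v ≠ 0, with α(v) = ⟨v,Av⟩/⟨Av,Av⟩, one has ‖(I − α(v)A)v‖ ≤ ((λ_max − λ_min)/(λ_max + λ_min)) ‖v‖. -/
/-!
Write `s = v ⬝ v`, `t = v ⬝ Av`, `q = Av ⬝ Av`. The step `α = t / q` minimises
`‖v - c Av‖² = s - 2ct + c²q` over `c`, so it suffices to bound the residual for the fixed step
`c = 2 / (λ_max + λ_min)`. For that step `κ²s - ‖v - c Av‖² = c² ⟨(λ_max - A)v, (A - λ_min)v⟩`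
with `κ = (λ_max - λ_min) / (λ_max + λ_min)`, and the right-hand side is nonnegative because
`(λ_max - A)(A - λ_min)` is positive semidefinite by the functional calculus.
-/

open Matrix

namespace Matrix

variable {n : Type*} [Fintype n]

theorem dotProduct_self_sub_div_smul_le {K : Type*} [Field K] [LinearOrder K]
    [IsStrictOrderedRing K] (x y : n → K) (c : K) :
    (x - (x ⬝ᵥ y / (y ⬝ᵥ y)) • y) ⬝ᵥ (x - (x ⬝ᵥ y / (y ⬝ᵥ y)) • y)
      ≤ (x - c • y) ⬝ᵥ (x - c • y) := by
  have expand (a : K) : (x - a • y) ⬝ᵥ (x - a • y)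
      = x ⬝ᵥ x - 2 * a * (x ⬝ᵥ y) + a ^ 2 * (y ⬝ᵥ y) := by
    simp only [sub_dotProduct, dotProduct_sub, smul_dotProduct, dotProduct_smul, smul_eq_mul,
      dotProduct_comm y x]
    ring
  rcases eq_or_ne (y ⬝ᵥ y) 0 with hyy | hyy
  · simp [dotProduct_self_eq_zero.1 hyy]
  have hyy_nonneg : 0 ≤ y ⬝ᵥ y := Finset.sum_nonneg fun i _ => mul_self_nonneg (y i)
  rw [expand, expand, ← sub_nonneg]
  calc (0 : K) ≤ (y ⬝ᵥ y) * (c - x ⬝ᵥ y / (y ⬝ᵥ y)) ^ 2 := by positivity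
    _ = _ := by field_simp; ring

open scoped ComplexOrder

variable [DecidableEq n] {𝕜 : Type*} [RCLike 𝕜]

theorem PosDef.pos_of_mem_spectrum {A : Matrix n n 𝕜} (hA : A.PosDef) {x : ℝ}
    (hx : x ∈ spectrum ℝ A) : 0 < x := by
  obtain ⟨i, rfl⟩ := hA.isHermitian.spectrum_real_eq_range_eigenvalues ▸ hx
  exact hA.eigenvalues_pos i

open scoped MatrixOrder in
theorem IsHermitian.posSemidef_sub_mul_sub_of_spectrum_subset_Icc {A : Matrix n n 𝕜}
    (hA : A.IsHermitian) {m M : ℝ} (h : spectrum ℝ A ⊆ Set.Icc m M) :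
    ((algebraMap ℝ _ M - A) * (A - algebraMap ℝ _ m)).PosSemidef := by
  have hsa : IsSelfAdjoint A := hA
  rw [← nonneg_iff_posSemidef, ← cfc_id' ℝ A, ← cfc_const M A, ← cfc_const m A,
    ← cfc_sub .., ← cfc_sub .., ← cfc_mul ..]
  exact cfc_nonneg fun x hx => mul_nonneg (sub_nonneg.2 (h hx).2) (sub_nonneg.2 (h hx).1)

variable {A : Matrix n n ℝ} {m M : ℝ}

theorem IsSymm.smul_sub_mulVec_dotProduct_mulVec_sub_smul_nonneg (hA : A.IsSymm)
    (h : spectrum ℝ A ⊆ Set.Icc m M) (v : n → ℝ) :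
    0 ≤ (M • v - A *ᵥ v) ⬝ᵥ (A *ᵥ v - m • v) := by
  have hsymm : (algebraMap ℝ _ M - A)ᵀ = algebraMap ℝ _ M - A := by
    rw [transpose_sub, hA.eq, algebraMap_eq_diagonal, diagonal_transpose]
  have hpsd := ((isHermitian_iff_isSymm.2 hA).posSemidef_sub_mul_sub_of_spectrum_subset_Icc h
    ).dotProduct_mulVec_nonneg v
  rw [star_trivial, ← mulVec_mulVec, dotProduct_mulVec, ← mulVec_transpose, hsymm] at hpsd
  simpa only [sub_mulVec, Algebra.algebraMap_eq_smul_one, smul_mulVec, one_mulVec] using hpsd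

theorem IsSymm.dotProduct_self_sub_smul_mulVec_le (hA : A.IsSymm)
    (h : spectrum ℝ A ⊆ Set.Icc m M) (hmM : 0 < M + m) (v : n → ℝ) :
    (v - (2 / (M + m)) • A *ᵥ v) ⬝ᵥ (v - (2 / (M + m)) • A *ᵥ v)
      ≤ ((M - m) / (M + m)) ^ 2 * (v ⬝ᵥ v) := by
  have key := hA.smul_sub_mulVec_dotProduct_mulVec_sub_smul_nonneg h v
  simp only [sub_dotProduct, dotProduct_sub, smul_dotProduct, dotProduct_smul, smul_eq_mul,
    dotProduct_comm (A *ᵥ v) v] at key ⊢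
  rw [← sub_nonneg]
  calc (0 : ℝ) ≤ (2 / (M + m)) ^ 2 * (M * (v ⬝ᵥ A *ᵥ v) - (A *ᵥ v) ⬝ᵥ (A *ᵥ v) -
        m * (M * (v ⬝ᵥ v) - v ⬝ᵥ A *ᵥ v)) :=
        mul_nonneg (sq_nonneg _) key
    _ = _ := by field_simp; ring

end Matrix

theorem stmt5_general {n : ℕ} (A : Matrix (Fin n) (Fin n) ℝ) (hA : A.IsSymm)
    (hpd : A.PosDef) (lmin lmax : ℝ)
    (hmin : Module.End.HasEigenvalue (Matrix.toLin' A) lmin)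
    (hmax : Module.End.HasEigenvalue (Matrix.toLin' A) lmax)
    (hbound : ∀ μ : ℝ, Module.End.HasEigenvalue (Matrix.toLin' A) μ → lmin ≤ μ ∧ μ ≤ lmax)
    (v : Fin n → ℝ)
    (αv : ℝ) (hαv : αv = v ⬝ᵥ A.mulVec v / (A.mulVec v ⬝ᵥ A.mulVec v)) :
    Real.sqrt ((v - αv • A.mulVec v) ⬝ᵥ (v - αv • A.mulVec v))
      ≤ (lmax - lmin) / (lmax + lmin) * Real.sqrt (v ⬝ᵥ v) := by
  have mem_spectrum {μ : ℝ} : Module.End.HasEigenvalue (toLin' A) μ ↔ μ ∈ spectrum ℝ A := by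
    rw [Module.End.hasEigenvalue_iff_mem_spectrum, spectrum_toLin']
  have hspec : spectrum ℝ A ⊆ Set.Icc lmin lmax := fun μ hμ => hbound μ (mem_spectrum.2 hμ)
  have hmin_pos : 0 < lmin := hpd.pos_of_mem_spectrum (mem_spectrum.1 hmin)
  have hle : lmin ≤ lmax := (hbound lmax hmax).1
  subst hαv
  calc Real.sqrt ((v - _ • A *ᵥ v) ⬝ᵥ (v - _ • A *ᵥ v))
      ≤ Real.sqrt (((lmax - lmin) / (lmax + lmin)) ^ 2 * (v ⬝ᵥ v)) :=
        Real.sqrt_le_sqrt <| (dotProduct_self_sub_div_smul_le v _ _).trans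
          (hA.dotProduct_self_sub_smul_mulVec_le hspec (by linarith) v)
    _ = (lmax - lmin) / (lmax + lmin) * Real.sqrt (v ⬝ᵥ v) := by
        rw [Real.sqrt_mul (sq_nonneg _), Real.sqrt_sq (div_nonneg (by linarith) (by linarith))]

theorem stmt5 {n : ℕ} (A : Matrix (Fin n) (Fin n) ℝ) (hA : A.IsSymm)
    (hpd : A.PosDef) (lmin lmax : ℝ)
    (hmin : Module.End.HasEigenvalue (Matrix.toLin' A) lmin)
    (hmax : Module.End.HasEigenvalue (Matrix.toLin' A) lmax)
    (hbound : ∀ μ : ℝ, Module.End.HasEigenvalue (Matrix.toLin' A) μ → lmin ≤ μ ∧ μ ≤ lmax)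
    (v : Fin n → ℝ) (hv : v ≠ 0)
    (αv : ℝ) (hαv : αv = v ⬝ᵥ A.mulVec v / (A.mulVec v ⬝ᵥ A.mulVec v)) :
    Real.sqrt ((v - αv • A.mulVec v) ⬝ᵥ (v - αv • A.mulVec v))
      ≤ (lmax - lmin) / (lmax + lmin) * Real.sqrt (v ⬝ᵥ v) :=
  stmt5_general A hA hpd lmin lmax hmin hmax hbound v αv hαv
end

section
/- Let A be a symmetric positive definite real n×n matrix. For the GMRES(1) (minimal residual) iteration r_{k+1} = r_k − α_k A r_k with α_k = ⟨r_k, A r_k⟩/⟨A r_k, A r_k⟩ (and r_{k+1} = 0 if r_k = 0), the residuals satisfy ‖r_k‖ ≤ σ^k ‖r_0‖ where σ = (λ_max(A) − λ_min(A))/(λ_max(A) + λ_min(A)) < 1; in particular the iteration converges for every initial residual. -/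
/-!
If the eigenvalues of the symmetric matrix `A` lie in `[a, b]` with `0 < a`, then in an orthonormal
eigenbasis `‖Av‖² + ab‖v‖² ≤ (a + b)⟨v, Av⟩`, and AM-GM turns this into the Kantorovich-type bound
`⟨v, Av⟩² / ‖Av‖² ≥ 4ab / (a + b)² · ‖v‖²`. A GMRES(1) step removes exactly `⟨v, Av⟩² / ‖Av‖²`
from `‖v‖²`, so it multiplies `‖v‖²` by at most `1 - 4ab / (a + b)² = ((b - a) / (b + a))²`.
-/

open Matrix Filter

namespace Matrix.IsHermitian

variable {ι : Type*} [Fintype ι] [DecidableEq ι] {A : Matrix ι ι ℝ}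

lemma hasEigenvalue_toLin'_iff (hA : A.IsHermitian) {μ : ℝ} :
    Module.End.HasEigenvalue (toLin' A) μ ↔ μ ∈ Set.range hA.eigenvalues := by
  rw [Module.End.hasEigenvalue_iff_mem_spectrum, spectrum_toLin',
    hA.spectrum_real_eq_range_eigenvalues]

lemma dotProduct_eq_sum_eigenvectorBasis (hA : A.IsHermitian) (v w : ι → ℝ) :
    v ⬝ᵥ w = ∑ i, (⇑(hA.eigenvectorBasis i) ⬝ᵥ v) * (⇑(hA.eigenvectorBasis i) ⬝ᵥ w) := by
  have := hA.eigenvectorBasis.sum_inner_mul_inner (WithLp.toLp 2 v) (WithLp.toLp 2 w)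
  simp only [EuclideanSpace.inner_eq_star_dotProduct, star_trivial] at this
  rw [dotProduct_comm, ← this]
  exact Finset.sum_congr rfl fun i _ => by rw [dotProduct_comm w]

lemma eigenvectorBasis_dotProduct_mulVec (hA : A.IsHermitian) (i : ι) (v : ι → ℝ) :
    ⇑(hA.eigenvectorBasis i) ⬝ᵥ (A *ᵥ v) = hA.eigenvalues i * (⇑(hA.eigenvectorBasis i) ⬝ᵥ v) := by
  rw [dotProduct_mulVec, ← mulVec_transpose, ← conjTranspose_eq_transpose_of_trivial, hA.eq,
    hA.mulVec_eigenvectorBasis, smul_dotProduct, smul_eq_mul]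

/-- This is `⟨(A - a)(A - b) v, v⟩ ≤ 0`, read off in an orthonormal eigenbasis. -/
lemma mulVec_dotProduct_mulVec_add_le (hA : A.IsHermitian) {a b : ℝ}
    (hab : ∀ i, a ≤ hA.eigenvalues i ∧ hA.eigenvalues i ≤ b) (v : ι → ℝ) :
    A *ᵥ v ⬝ᵥ A *ᵥ v + a * b * (v ⬝ᵥ v) ≤ (a + b) * (v ⬝ᵥ A *ᵥ v) := by
  simp only [hA.dotProduct_eq_sum_eigenvectorBasis (A *ᵥ v),
    hA.dotProduct_eq_sum_eigenvectorBasis v, hA.eigenvectorBasis_dotProduct_mulVec,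
    Finset.mul_sum, ← Finset.sum_add_distrib]
  refine Finset.sum_le_sum fun i _ => ?_
  obtain ⟨ha, hb⟩ := hab i
  nlinarith [mul_nonneg (mul_nonneg (sub_nonneg.2 ha) (sub_nonneg.2 hb))
    (mul_self_nonneg (⇑(hA.eigenvectorBasis i) ⬝ᵥ v))]

end Matrix.IsHermitian

section MinRes

variable {ι : Type*} [Fintype ι]

/-- One GMRES(1) step: `α = ⟨v, Av⟩ / ⟨Av, Av⟩` minimizes `‖v - α • A v‖`. -/
noncomputable def minResStep (A : Matrix ι ι ℝ) (v : ι → ℝ) : ι → ℝ :=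
  if v = 0 then 0 else v - (v ⬝ᵥ A *ᵥ v / (A *ᵥ v ⬝ᵥ A *ᵥ v)) • A *ᵥ v

lemma dotProduct_self_minResStep {A : Matrix ι ι ℝ} {v : ι → ℝ} (hAv : A *ᵥ v ≠ 0) :
    minResStep A v ⬝ᵥ minResStep A v = v ⬝ᵥ v - (v ⬝ᵥ A *ᵥ v) ^ 2 / (A *ᵥ v ⬝ᵥ A *ᵥ v) := by
  have hv : v ≠ 0 := by rintro rfl; exact hAv (mulVec_zero A)
  have hq : A *ᵥ v ⬝ᵥ A *ᵥ v ≠ 0 := (dotProduct_self_eq_zero.not).2 hAv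
  rw [minResStep, if_neg hv]
  simp only [sub_dotProduct, dotProduct_sub, smul_dotProduct, dotProduct_smul, smul_eq_mul,
    dotProduct_comm (A *ᵥ v) v]
  field_simp
  ring

lemma Matrix.IsHermitian.dotProduct_self_minResStep_le [DecidableEq ι] {A : Matrix ι ι ℝ}
    (hA : A.IsHermitian) {a b : ℝ} (ha : 0 < a)
    (hab : ∀ i, a ≤ hA.eigenvalues i ∧ hA.eigenvalues i ≤ b) (v : ι → ℝ) :
    minResStep A v ⬝ᵥ minResStep A v ≤ ((b - a) / (b + a)) ^ 2 * (v ⬝ᵥ v) := by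
  by_cases hv : v = 0
  · simp [minResStep, hv]
  obtain ⟨i, -⟩ := Function.ne_iff.1 hv
  have hb : a ≤ b := (hab i).1.trans (hab i).2
  have hkey := hA.mulVec_dotProduct_mulVec_add_le hab v
  set t := v ⬝ᵥ v
  set s := v ⬝ᵥ A *ᵥ v
  set q := A *ᵥ v ⬝ᵥ A *ᵥ v
  have ht : 0 < t := by simpa only [star_trivial] using dotProduct_star_self_pos_iff.2 hv
  have hab0 : 0 < a + b := by linarith
  have habt : 0 < a * b * t := mul_pos (mul_pos ha (ha.trans_le hb)) ht
  have hAv : A *ᵥ v ≠ 0 := by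
    intro h
    simp only [q, s, h, dotProduct_zero] at hkey
    linarith
  have hq : 0 < q := by simpa only [star_trivial] using dotProduct_star_self_pos_iff.2 hAv
  -- AM-GM: `4 (abt) q ≤ (q + abt)² ≤ ((a + b) s)²`
  have hkant : 4 * a * b * t * q ≤ ((a + b) * s) ^ 2 := by
    nlinarith [sq_nonneg (q - a * b * t), pow_le_pow_left₀ (by positivity) hkey 2]
  have hlow : 4 * a * b * t / (a + b) ^ 2 ≤ s ^ 2 / q := by
    rw [div_le_div_iff₀ (by positivity) hq]
    linarith
  calc minResStep A v ⬝ᵥ minResStep A v = t - s ^ 2 / q := dotProduct_self_minResStep hAv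
    _ ≤ t - 4 * a * b * t / (a + b) ^ 2 := by linarith
    _ = ((b - a) / (b + a)) ^ 2 * t := by
        rw [add_comm b a]
        field_simp
        ring

end MinRes

lemma norm_le_sqrt_dotProduct_self {ι : Type*} [Fintype ι] (v : ι → ℝ) : ‖v‖ ≤ √(v ⬝ᵥ v) := by
  refine (pi_norm_le_iff_of_nonneg (Real.sqrt_nonneg _)).2 fun i => ?_
  rw [Real.norm_eq_abs, ← Real.sqrt_sq_eq_abs, sq]
  exact Real.sqrt_le_sqrt (Finset.single_le_sum (f := fun j => v j * v j)
    (fun j _ => mul_self_nonneg (v j)) (Finset.mem_univ i))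

theorem stmt6_general {n : ℕ} (A : Matrix (Fin n) (Fin n) ℝ)
    (hpd : A.PosDef) (lmin lmax : ℝ)
    (hmin : Module.End.HasEigenvalue (Matrix.toLin' A) lmin)
    (hbound : ∀ μ : ℝ, Module.End.HasEigenvalue (Matrix.toLin' A) μ → lmin ≤ μ ∧ μ ≤ lmax)
    (r : ℕ → Fin n → ℝ)
    (hrec : ∀ k, r (k + 1) = if r k = 0 then 0 else
      r k - (r k ⬝ᵥ A.mulVec (r k) / (A.mulVec (r k) ⬝ᵥ A.mulVec (r k))) • A.mulVec (r k))
    (σ : ℝ) (hσ : σ = (lmax - lmin) / (lmax + lmin)) :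
    σ < 1 ∧
    (∀ k, Real.sqrt (r k ⬝ᵥ r k) ≤ σ ^ k * Real.sqrt (r 0 ⬝ᵥ r 0)) ∧
    Tendsto r atTop (nhds 0) := by
  have hH := hpd.isHermitian
  have heig : ∀ i, lmin ≤ hH.eigenvalues i ∧ hH.eigenvalues i ≤ lmax :=
    fun i => hbound _ (hH.hasEigenvalue_toLin'_iff.2 ⟨i, rfl⟩)
  obtain ⟨i, rfl⟩ := hH.hasEigenvalue_toLin'_iff.1 hmin
  have hlmin := hpd.eigenvalues_pos i
  have hle := (heig i).2
  have hσ0 : 0 ≤ σ := hσ ▸ div_nonneg (by linarith) (by linarith)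
  have hσ1 : σ < 1 := by rw [hσ, div_lt_one (by linarith)]; linarith
  have hstep : ∀ k, √(r (k + 1) ⬝ᵥ r (k + 1)) ≤ σ * √(r k ⬝ᵥ r k) := fun k => by
    rw [hrec k, ← Real.sqrt_sq hσ0, ← Real.sqrt_mul (sq_nonneg _), hσ]
    exact Real.sqrt_le_sqrt (hH.dotProduct_self_minResStep_le hlmin heig (r k))
  have hgeom : ∀ k, √(r k ⬝ᵥ r k) ≤ σ ^ k * √(r 0 ⬝ᵥ r 0) :=
    fun k => le_geom (u := fun k => √(r k ⬝ᵥ r k)) hσ0 k fun j _ => hstep j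
  refine ⟨hσ1, hgeom,
    squeeze_zero_norm (fun k => (norm_le_sqrt_dotProduct_self _).trans (hgeom k)) ?_⟩
  simpa using (tendsto_pow_atTop_nhds_zero_of_lt_one hσ0 hσ1).mul_const √(r 0 ⬝ᵥ r 0)

theorem stmt6 {n : ℕ} (A : Matrix (Fin n) (Fin n) ℝ) (hA : A.IsSymm)
    (hpd : A.PosDef) (lmin lmax : ℝ)
    (hmin : Module.End.HasEigenvalue (Matrix.toLin' A) lmin)
    (hmax : Module.End.HasEigenvalue (Matrix.toLin' A) lmax)
    (hbound : ∀ μ : ℝ, Module.End.HasEigenvalue (Matrix.toLin' A) μ → lmin ≤ μ ∧ μ ≤ lmax)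
    (r : ℕ → Fin n → ℝ)
    (hrec : ∀ k, r (k + 1) = if r k = 0 then 0 else
      r k - (r k ⬝ᵥ A.mulVec (r k) / (A.mulVec (r k) ⬝ᵥ A.mulVec (r k))) • A.mulVec (r k))
    (σ : ℝ) (hσ : σ = (lmax - lmin) / (lmax + lmin)) :
    σ < 1 ∧
    (∀ k, Real.sqrt (r k ⬝ᵥ r k) ≤ σ ^ k * Real.sqrt (r 0 ⬝ᵥ r 0)) ∧
    Tendsto r atTop (nhds 0) :=
  stmt6_general A hpd lmin lmax hmin hbound r hrec σ hσ
end

section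
/- Let β₁, β₂ ∈ ℝ with β₁β₂ ≠ 0 and λ ∈ ℝ with λ ≠ 0. The quartic polynomial g(b) = (1 − β₂ b)(1 − β₁ b)(1 − b)² takes any fixed value λ for at most four distinct real b. Consequently, an eigenvector of the rAA(1) two-cycle operator Υ(u)u = λu (A symmetric), when expanded in an orthonormal eigenbasis of A, has nonzero coefficients associated with at most four distinct eigenvalues of A. -/
open Matrix Polynomial

theorem stmt12 {n : ℕ} (β1 β2 lam : ℝ) (hβ : β1 * β2 ≠ 0) (hlam : lam ≠ 0)
    (A : Matrix (Fin n) (Fin n) ℝ) (hA : A.IsSymm) (hAinv : IsUnit A.det)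
    (M : Matrix (Fin n) (Fin n) ℝ) (hM : M = 1 - A)
    (e : Fin n → Fin n → ℝ) (a : Fin n → ℝ)
    (heig : ∀ i, A.mulVec (e i) = a i • e i)
    (horth : ∀ i j, e i ⬝ᵥ e j = if i = j then 1 else 0)
    (c : Fin n → ℝ) (u : Fin n → ℝ) (hu : u = ∑ i, c i • e i)
    (α : (Fin n → ℝ) → ℝ)
    (hα : ∀ v, α v = v ⬝ᵥ A.mulVec v / (A.mulVec v ⬝ᵥ A.mulVec v))
    (Ψ : (Fin n → ℝ) → (Fin n → ℝ))
    (hΨ : ∀ v, Ψ v = M.mulVec (v - α v • A.mulVec v))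
    (hβ1 : β1 = α u) (hβ2 : β2 = α (Ψ u))
    (hup : M.mulVec (Ψ u - α (Ψ u) • A.mulVec (Ψ u)) = lam • u) :
    ({b : ℝ | (1 - β2 * b) * (1 - β1 * b) * (1 - b) ^ 2 = lam}.Finite ∧
     {b : ℝ | (1 - β2 * b) * (1 - β1 * b) * (1 - b) ^ 2 = lam}.ncard ≤ 4) ∧
    {x : ℝ | ∃ i, c i ≠ 0 ∧ a i = x}.ncard ≤ 4 := by
  have hβ1' : β1 ≠ 0 := fun h => hβ (by rw [h, zero_mul])
  have hβ2' : β2 ≠ 0 := fun h => hβ (by rw [h, mul_zero])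
  -- polynomial part
  set q : ℝ[X] := (1 - C β2 * X) * ((1 - C β1 * X) * (1 - X) ^ 2) with hq
  have hlin : ∀ t : ℝ, (1 - C t * X : ℝ[X]) = C (-t) * X + C 1 := by
    intro t; rw [map_neg, Polynomial.C_1]; ring
  have hdeg : ∀ t : ℝ, t ≠ 0 → ((1 - C t * X : ℝ[X]).natDegree = 1 ∧
      (1 - C t * X : ℝ[X]).leadingCoeff = -t) := by
    intro t ht
    rw [hlin t]
    exact ⟨Polynomial.natDegree_linear (neg_ne_zero.mpr ht),
      Polynomial.leadingCoeff_linear (neg_ne_zero.mpr ht)⟩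
  have h1 := hdeg β2 hβ2'
  have h2 := hdeg β1 hβ1'
  have e3 : (1 - X : ℝ[X]) = C (-1) * X + C 1 := by
    rw [map_neg, Polynomial.C_1]; ring
  have h3 : (1 - X : ℝ[X]).natDegree = 1 ∧ (1 - X : ℝ[X]).leadingCoeff = -1 := by
    rw [e3]
    exact ⟨Polynomial.natDegree_linear (by norm_num),
      Polynomial.leadingCoeff_linear (by norm_num)⟩
  have hqlc : q.leadingCoeff = β1 * β2 := by
    rw [hq, leadingCoeff_mul, leadingCoeff_mul, leadingCoeff_pow, h1.2, h2.2, h3.2]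
    ring
  have hq0 : q ≠ 0 := fun h => hβ (by rw [← hqlc, h, leadingCoeff_zero])
  have hqdeg : q.natDegree = 4 := by
    have m1 : (1 - C β2 * X : ℝ[X]) ≠ 0 := fun h => by
      simpa [h, neg_ne_zero, hβ2'] using h1.2.symm
    have m2 : (1 - C β1 * X : ℝ[X]) ≠ 0 := fun h => by
      simpa [h, neg_ne_zero, hβ1'] using h2.2.symm
    have m3 : ((1 - X : ℝ[X]) ^ 2) ≠ 0 := pow_ne_zero _ (fun h => by
      simpa [h] using h3.2.symm)
    rw [hq, Polynomial.natDegree_mul m1 (mul_ne_zero m2 m3),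
      Polynomial.natDegree_mul m2 m3, Polynomial.natDegree_pow, h1.1, h2.1, h3.1]
  set P : ℝ[X] := q - C lam with hP
  have hP0 : P ≠ 0 := by
    intro h
    have : q = C lam := by rwa [hP, sub_eq_zero] at h
    rw [this, natDegree_C] at hqdeg
    exact absurd hqdeg (by norm_num)
  have hPdeg : P.natDegree ≤ 4 := by
    rw [hP]
    refine le_trans (natDegree_sub_le _ _) ?_
    simp [hqdeg]
  have hset : {b : ℝ | (1 - β2 * b) * (1 - β1 * b) * (1 - b) ^ 2 = lam}
      = {x : ℝ | P.IsRoot x} := by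
    ext b
    simp only [Set.mem_setOf_eq, hP, hq, IsRoot.def, eval_sub, eval_mul, eval_pow,
      eval_one, eval_C, eval_X, sub_eq_zero]
    constructor <;> intro h <;> linarith [h]
  have hfin : {b : ℝ | (1 - β2 * b) * (1 - β1 * b) * (1 - b) ^ 2 = lam}.Finite := by
    rw [hset]; exact Polynomial.finite_setOf_isRoot hP0
  have hcard : {b : ℝ | (1 - β2 * b) * (1 - β1 * b) * (1 - b) ^ 2 = lam}.ncard ≤ 4 := by
    rw [hset]
    have hrs : {x : ℝ | P.IsRoot x} = ↑P.roots.toFinset := by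
      ext x; simp [Polynomial.mem_roots, hP0]
    rw [hrs, Set.ncard_coe_finset]
    calc P.roots.toFinset.card ≤ Multiset.card P.roots := Multiset.toFinset_card_le _
      _ ≤ P.natDegree := Polynomial.card_roots' P
      _ ≤ 4 := hPdeg
  refine ⟨⟨hfin, hcard⟩, ?_⟩
  -- eigenvector part
  have hAv : ∀ d : Fin n → ℝ, A.mulVec (∑ i, d i • e i) = ∑ i, (a i * d i) • e i := by
    intro d
    have := map_sum (Matrix.mulVecLin A) (fun i => d i • e i) Finset.univ
    simp only [Matrix.mulVecLin_apply] at this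
    rw [this]
    refine Finset.sum_congr rfl fun i _ => ?_
    rw [Matrix.mulVec_smul, heig i, smul_smul, mul_comm]
  have hMv : ∀ d : Fin n → ℝ, M.mulVec (∑ i, d i • e i) = ∑ i, ((1 - a i) * d i) • e i := by
    intro d
    rw [hM, Matrix.sub_mulVec, Matrix.one_mulVec, hAv, ← Finset.sum_sub_distrib]
    refine Finset.sum_congr rfl fun i _ => ?_
    rw [← sub_smul]; ring_nf
  have hdot : ∀ (d : Fin n → ℝ) j, (∑ i, d i • e i) ⬝ᵥ e j = d j := by
    intro d j
    simp only [dotProduct, Finset.sum_apply, Pi.smul_apply, smul_eq_mul, Finset.sum_mul]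
    rw [Finset.sum_comm]
    have hterm : ∀ i, ∑ k, d i * e i k * e j k = d i * (e i ⬝ᵥ e j) := fun i => by
      rw [dotProduct, Finset.mul_sum]; exact Finset.sum_congr rfl fun k _ => by ring
    simp only [hterm, horth]
    simp
  have hsub : ∀ (d : Fin n → ℝ) (t : ℝ),
      (∑ i, d i • e i) - t • ∑ i, (a i * d i) • e i = ∑ i, ((1 - t * a i) * d i) • e i := by
    intro d t
    rw [Finset.smul_sum, ← Finset.sum_sub_distrib]
    refine Finset.sum_congr rfl fun i _ => ?_
    rw [smul_smul, ← sub_smul]; ring_nf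
  have hΨu : Ψ u = ∑ i, ((1 - a i) * ((1 - β1 * a i) * c i)) • e i := by
    rw [hΨ, ← hβ1, hu, hAv, hsub, hMv]
  have hlhs : M.mulVec (Ψ u - α (Ψ u) • A.mulVec (Ψ u)) =
      ∑ i, ((1 - a i) * ((1 - β2 * a i) * ((1 - a i) * ((1 - β1 * a i) * c i)))) • e i := by
    conv_lhs => rw [← hβ2, hΨu, hAv, hsub, hMv]
  have hrhs : lam • u = ∑ i, (lam * c i) • e i := by
    rw [hu, Finset.smul_sum]
    exact Finset.sum_congr rfl fun i _ => by rw [smul_smul]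
  have key : ∀ j, (1 - a j) * ((1 - β2 * a j) * ((1 - a j) * ((1 - β1 * a j) * c j))) =
      lam * c j := by
    intro j
    have h := hup
    rw [hlhs, hrhs] at h
    have h2 := congrArg (· ⬝ᵥ e j) h
    simpa [hdot] using h2
  refine le_trans (Set.ncard_le_ncard ?_ hfin) hcard
  intro x hx
  obtain ⟨i, hci, rfl⟩ := hx
  have hk := key i
  have hk2 : ((1 - β2 * a i) * (1 - β1 * a i) * (1 - a i) ^ 2) * c i = lam * c i := by
    rw [← hk]; ring
  exact mul_right_cancel₀ hci hk2
end

section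
/- Let M = I − A be skew-symmetric (Mᵀ = −M) with A = I − M invertible, and suppose q spans an M-invariant two-dimensional subspace span{Q_j} associated with the conjugate eigenvalue pair ±i|m_j| of M. Then α(q) = ⟨q, Aq⟩/⟨Aq, Aq⟩ = 1/(1 + |m_j|²). -/
open Matrix

theorem stmt13 {n : ℕ} (M : Matrix (Fin n) (Fin n) ℝ) (hM : Mᵀ = -M)
    (A : Matrix (Fin n) (Fin n) ℝ) (hA : A = 1 - M) (hAinv : IsUnit A.det)
    (q1 q2 : Fin n → ℝ) (m : ℝ)
    (h11 : q1 ⬝ᵥ q1 = 1) (h22 : q2 ⬝ᵥ q2 = 1) (h12 : q1 ⬝ᵥ q2 = 0)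
    (hM1 : M.mulVec q1 = m • q2) (hM2 : M.mulVec q2 = -m • q1)
    (c1 c2 : ℝ) (q : Fin n → ℝ) (hq : q = c1 • q1 + c2 • q2) (hq0 : q ≠ 0) :
    q ⬝ᵥ A.mulVec q / (A.mulVec q ⬝ᵥ A.mulVec q) = 1 / (1 + m ^ 2) := by
  have h21 : q2 ⬝ᵥ q1 = 0 := by rw [dotProduct_comm]; exact h12
  have hAq : A.mulVec q = (c1 + c2 * m) • q1 + (c2 - c1 * m) • q2 := by
    subst hA hq
    simp [sub_mulVec, mulVec_add, mulVec_smul, hM1, hM2, one_mulVec,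
      smul_smul, smul_add]
    ext i
    simp [Pi.smul_apply, Pi.add_apply, Pi.sub_apply]
    ring
  have hs : c1 ^ 2 + c2 ^ 2 ≠ 0 := by
    intro h
    have h1 : c1 = 0 := by nlinarith [sq_nonneg c1, sq_nonneg c2]
    have h2 : c2 = 0 := by nlinarith [sq_nonneg c1, sq_nonneg c2]
    apply hq0
    rw [hq, h1, h2]; simp
  have num : q ⬝ᵥ A.mulVec q = c1 ^ 2 + c2 ^ 2 := by
    rw [hAq, hq]
    simp [dotProduct_add, add_dotProduct, dotProduct_smul, smul_dotProduct,
      h11, h22, h12, h21]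
    ring
  have den : A.mulVec q ⬝ᵥ A.mulVec q = (c1 ^ 2 + c2 ^ 2) * (1 + m ^ 2) := by
    rw [hAq]
    simp [dotProduct_add, add_dotProduct, dotProduct_smul, smul_dotProduct,
      h11, h22, h12, h21]
    ring
  rw [num, den]
  rw [div_eq_div_iff]
  · ring
  · positivity
  · positivity
end

section
/- Let M ∈ ℝ^{n×n} be skew-symmetric and A = I − M. For every nonzero v ∈ ℝⁿ, α(v) = ⟨v,Av⟩/⟨Av,Av⟩ lies in the interval [1/(1 + (m*)²), 1/(1 + m_*²)] ⊆ (0, 1], where m* and m_* are the maximum and minimum moduli of the eigenvalues of M. -/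
/-! For skew-symmetric `M` the cross terms `⟨v, Mv⟩` vanish, so `α(v) = |v|² / (|v|² + |Mv|²)`.
Since `MᵀM = -M²`, spectral mapping over `ℂ` shows that the eigenvalues of the symmetric matrix
`MᵀM` are the squared moduli of the eigenvalues of `M`; hence the Rayleigh quotient
`|Mv|² / |v|²` lies between `m_*²` and `m*²`, which gives both bounds on `α(v)`. -/

open Matrix

namespace Matrix

section Skew

variable {n R : Type*} [Fintype n] [CommRing R] {M : Matrix n n R}

theorem dotProduct_transpose_mul_mulVec (v : n → R) :
    v ⬝ᵥ (Mᵀ * M) *ᵥ v = M *ᵥ v ⬝ᵥ M *ᵥ v := by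
  rw [← mulVec_mulVec, dotProduct_mulVec, vecMul_transpose]

theorem dotProduct_mulVec_self_eq_zero_of_transpose_eq_neg [NoZeroDivisors R] [CharZero R]
    (hM : Mᵀ = -M) (v : n → R) : v ⬝ᵥ M *ᵥ v = 0 := by
  have h : v ⬝ᵥ M *ᵥ v = -(v ⬝ᵥ M *ᵥ v) := by
    conv_lhs => rw [dotProduct_mulVec, ← mulVec_transpose, hM, neg_mulVec, dotProduct_comm]
    rw [dotProduct_neg]
  exact add_self_eq_zero.1 (eq_neg_iff_add_eq_zero.1 h)

variable [DecidableEq n] [NoZeroDivisors R] [CharZero R]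

theorem dotProduct_one_sub_mulVec_self_of_transpose_eq_neg (hM : Mᵀ = -M) (v : n → R) :
    v ⬝ᵥ (1 - M) *ᵥ v = v ⬝ᵥ v := by
  rw [sub_mulVec, one_mulVec, dotProduct_sub,
    dotProduct_mulVec_self_eq_zero_of_transpose_eq_neg hM, sub_zero]

theorem one_sub_mulVec_dotProduct_self_of_transpose_eq_neg (hM : Mᵀ = -M) (v : n → R) :
    (1 - M) *ᵥ v ⬝ᵥ (1 - M) *ᵥ v = v ⬝ᵥ v + M *ᵥ v ⬝ᵥ M *ᵥ v := by
  have hvMv := dotProduct_mulVec_self_eq_zero_of_transpose_eq_neg hM v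
  rw [sub_mulVec, one_mulVec, sub_dotProduct, dotProduct_sub, dotProduct_sub,
    dotProduct_comm (M *ᵥ v) v, hvMv]
  ring

end Skew

variable {n : Type*} [Fintype n] [DecidableEq n]

theorem mem_spectrum_map {K L : Type*} [Field K] [Field L] (f : K →+* L) {A : Matrix n n K}
    {r : K} (hr : r ∈ spectrum K A) : f r ∈ spectrum L (A.map f) := by
  rw [mem_spectrum_iff_isRoot_charpoly] at hr ⊢
  rw [charpoly_map]
  exact hr.map

theorem IsHermitian.dotProduct_mulVec_mem_Icc {S : Matrix n n ℝ} (hS : S.IsHermitian) {a b : ℝ}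
    (hab : spectrum ℝ S ⊆ Set.Icc a b) (v : n → ℝ) :
    v ⬝ᵥ S *ᵥ v ∈ Set.Icc (a * (v ⬝ᵥ v)) (b * (v ⬝ᵥ v)) := by
  have hscalar (c : ℝ) : (algebraMap ℝ (Matrix n n ℝ) c).IsHermitian := by
    rw [algebraMap_eq_diagonal]
    exact isHermitian_diagonal _
  have hquad (c : ℝ) : v ⬝ᵥ algebraMap ℝ (Matrix n n ℝ) c *ᵥ v = c * (v ⬝ᵥ v) := by
    rw [Algebra.algebraMap_eq_smul_one, smul_mulVec, one_mulVec, dotProduct_smul, smul_eq_mul]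
  have hlow : (S - algebraMap ℝ _ a).PosSemidef := by
    refine posSemidef_iff_isHermitian_and_spectrum_nonneg.2 ⟨hS.sub (hscalar a), ?_⟩
    rw [← spectrum.sub_singleton_eq]
    rintro _ ⟨x, hx, _, rfl, rfl⟩
    exact sub_nonneg.2 (hab hx).1
  have hhigh : (algebraMap ℝ _ b - S).PosSemidef := by
    refine posSemidef_iff_isHermitian_and_spectrum_nonneg.2 ⟨(hscalar b).sub hS, ?_⟩
    rw [← spectrum.singleton_sub_eq]
    rintro _ ⟨_, rfl, x, hx, rfl⟩
    exact sub_nonneg.2 (hab hx).2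
  have h₁ := hlow.dotProduct_mulVec_nonneg v
  have h₂ := hhigh.dotProduct_mulVec_nonneg v
  simp only [star_trivial, sub_mulVec, dotProduct_sub, hquad, sub_nonneg] at h₁ h₂
  exact ⟨h₁, h₂⟩

theorem exists_hasEigenvalue_sq_eq_neg_of_mem_spectrum {M : Matrix n n ℝ} (hM : Mᵀ = -M)
    {x : ℝ} (hx : x ∈ spectrum ℝ (Mᵀ * M)) :
    ∃ μ : ℂ, Module.End.HasEigenvalue (toLin' (M.map Complex.ofReal)) μ ∧ μ ^ 2 = -x := by
  rw [hM, Matrix.neg_mul, ← spectrum.neg_eq] at hx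
  have hxc := mem_spectrum_map Complex.ofRealHom (Set.mem_neg.1 hx)
  rw [Matrix.map_mul, ← sq, spectrum.map_pow_of_pos _ two_pos] at hxc
  obtain ⟨μ, hμ, hμx⟩ := hxc
  refine ⟨μ, ?_, by simpa using hμx⟩
  rwa [Module.End.hasEigenvalue_iff_mem_spectrum, spectrum_toLin']

theorem spectrum_transpose_mul_self_subset_Icc {M : Matrix n n ℝ} (hM : Mᵀ = -M) {a b : ℝ}
    (ha : 0 ≤ a)
    (hbound : ∀ μ : ℂ, Module.End.HasEigenvalue (toLin' (M.map Complex.ofReal)) μ →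
      a ≤ ‖μ‖ ∧ ‖μ‖ ≤ b) :
    spectrum ℝ (Mᵀ * M) ⊆ Set.Icc (a ^ 2) (b ^ 2) := by
  intro x hx
  have hx0 : 0 ≤ x := by
    simpa using posSemidef_iff_isHermitian_and_spectrum_nonneg.1
      (posSemidef_conjTranspose_mul_self M) |>.2 hx
  obtain ⟨μ, hμ, hμx⟩ := exists_hasEigenvalue_sq_eq_neg_of_mem_spectrum hM hx
  have hnorm : ‖μ‖ ^ 2 = x := by
    rw [← norm_pow, hμx, norm_neg, Complex.norm_real, Real.norm_of_nonneg hx0]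
  obtain ⟨haμ, hμb⟩ := hbound μ hμ
  exact ⟨hnorm ▸ pow_le_pow_left₀ ha haμ 2, hnorm ▸ pow_le_pow_left₀ (norm_nonneg μ) hμb 2⟩

end Matrix

theorem div_add_mem_Icc_of_mul_le {p q s t : ℝ} (hp : 0 < p) (hs : 0 ≤ s) (hsq : s * p ≤ q)
    (hqt : q ≤ t * p) : p / (p + q) ∈ Set.Icc (1 / (1 + t)) (1 / (1 + s)) := by
  have hq : 0 ≤ q := le_trans (mul_nonneg hs hp.le) hsq
  have ht : 0 ≤ t := nonneg_of_mul_nonneg_left (hq.trans hqt) hp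
  constructor
  · rw [div_le_div_iff₀ (by linarith) (by linarith)]
    linarith
  · rw [div_le_div_iff₀ (by linarith) (by linarith)]
    linarith

theorem Icc_one_div_one_add_subset_Ioc {s t : ℝ} (hs : 0 ≤ s) (ht : 0 ≤ t) :
    Set.Icc (1 / (1 + t)) (1 / (1 + s)) ⊆ Set.Ioc 0 1 := fun _ hx =>
  ⟨lt_of_lt_of_le (by positivity) hx.1, hx.2.trans (div_le_one_of_le₀ (by linarith) (by linarith))⟩

theorem stmt14_general {n : ℕ} (M : Matrix (Fin n) (Fin n) ℝ) (hM : Mᵀ = -M)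
    (A : Matrix (Fin n) (Fin n) ℝ) (hA : A = 1 - M)
    (mstar mlow : ℝ)
    (hstar_bound : ∀ μ : ℂ,
      Module.End.HasEigenvalue (Matrix.toLin' (M.map (Complex.ofReal))) μ →
        ‖μ‖ ≤ mstar)
    (hlow_bound : ∀ μ : ℂ,
      Module.End.HasEigenvalue (Matrix.toLin' (M.map (Complex.ofReal))) μ →
        mlow ≤ ‖μ‖)
    (hlow_mem : ∃ μ : ℂ,
      Module.End.HasEigenvalue (Matrix.toLin' (M.map (Complex.ofReal))) μ ∧
        ‖μ‖ = mlow)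
    (v : Fin n → ℝ) (hv : v ≠ 0) :
    v ⬝ᵥ A.mulVec v / (A.mulVec v ⬝ᵥ A.mulVec v) ∈
      Set.Icc (1 / (1 + mstar ^ 2)) (1 / (1 + mlow ^ 2)) ∧
    Set.Icc (1 / (1 + mstar ^ 2)) (1 / (1 + mlow ^ 2)) ⊆ Set.Ioc (0 : ℝ) 1 := by
  have hlow0 : 0 ≤ mlow := by
    obtain ⟨μ, -, rfl⟩ := hlow_mem
    exact norm_nonneg μ
  have hspec := spectrum_transpose_mul_self_subset_Icc hM hlow0
    fun μ hμ => ⟨hlow_bound μ hμ, hstar_bound μ hμ⟩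
  have hsymm : (Mᵀ * M).IsHermitian := by
    simpa using isHermitian_conjTranspose_mul_self M
  obtain ⟨hlow, hhigh⟩ := hsymm.dotProduct_mulVec_mem_Icc hspec v
  rw [dotProduct_transpose_mul_mulVec] at hlow hhigh
  have hv0 : 0 < v ⬝ᵥ v := by simpa using dotProduct_star_self_pos_iff.2 hv
  rw [hA, dotProduct_one_sub_mulVec_self_of_transpose_eq_neg hM,
    one_sub_mulVec_dotProduct_self_of_transpose_eq_neg hM]
  exact ⟨div_add_mem_Icc_of_mul_le hv0 (sq_nonneg _) hlow hhigh,
    Icc_one_div_one_add_subset_Ioc (sq_nonneg _) (sq_nonneg _)⟩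

theorem stmt14 {n : ℕ} (M : Matrix (Fin n) (Fin n) ℝ) (hM : Mᵀ = -M)
    (A : Matrix (Fin n) (Fin n) ℝ) (hA : A = 1 - M)
    (mstar mlow : ℝ)
    (hstar_bound : ∀ μ : ℂ,
      Module.End.HasEigenvalue (Matrix.toLin' (M.map (Complex.ofReal))) μ →
        ‖μ‖ ≤ mstar)
    (hstar_mem : ∃ μ : ℂ,
      Module.End.HasEigenvalue (Matrix.toLin' (M.map (Complex.ofReal))) μ ∧
        ‖μ‖ = mstar)
    (hlow_bound : ∀ μ : ℂ,
      Module.End.HasEigenvalue (Matrix.toLin' (M.map (Complex.ofReal))) μ →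
        mlow ≤ ‖μ‖)
    (hlow_mem : ∃ μ : ℂ,
      Module.End.HasEigenvalue (Matrix.toLin' (M.map (Complex.ofReal))) μ ∧
        ‖μ‖ = mlow)
    (v : Fin n → ℝ) (hv : v ≠ 0) :
    v ⬝ᵥ A.mulVec v / (A.mulVec v ⬝ᵥ A.mulVec v) ∈
      Set.Icc (1 / (1 + mstar ^ 2)) (1 / (1 + mlow ^ 2)) ∧
    Set.Icc (1 / (1 + mstar ^ 2)) (1 / (1 + mlow ^ 2)) ⊆ Set.Ioc (0 : ℝ) 1 :=
  stmt14_general M hM A hA mstar mlow hstar_bound hlow_bound hlow_mem v hv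
end

section
/- Let M ∈ ℝ^{n×n} be skew-symmetric and A = I − M. Define Φ(v) = (I − α(v)A)v with α(v) = ⟨v,Av⟩/⟨Av,Av⟩. Then for every nonzero v, ‖Φ(v)‖ ≤ (m*/√(1 + (m*)²)) ‖v‖, where m* is the spectral radius of M. Moreover, if q is nonzero and lies in the M-invariant 2D subspace span{Q_j} associated with eigenvalues ±i|m_j|, then Φ(q) ∈ span{Q_j} and ‖Φ(q)‖/‖q‖ = |m_j|/√(1 + |m_j|²). -/
/-!
Skewness of `M` gives `⟪v, M v⟫ = 0`, hence `⟪v, A v⟫ = ‖v‖²` and `‖A v‖² = ‖v‖² + ‖M v‖²`.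
As `Φ v` is the residual of the orthogonal projection of `v` onto `ℝ ∙ A v`, with `a = ‖v‖²` and
`b = ‖M v‖²` we get `‖Φ v‖² = a - a² / (a + b)`, which is increasing in `b`.
The complexification of `M` is normal, so its L2 operator norm equals its spectral radius `m*`,
giving `b ≤ m*² a`. On an invariant plane on which `M` acts as `m` times a rotation by a right
angle, `M² = -m²`, so `b = m² a` exactly.
-/

open Matrix

open scoped Matrix.Norms.L2Operator

namespace Matrix

variable {ι R K : Type*} [Fintype ι]

noncomputable def minResStep [Field K] (A : Matrix ι ι K) (v : ι → K) : ι → K :=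
  v - (v ⬝ᵥ A *ᵥ v / (A *ᵥ v ⬝ᵥ A *ᵥ v)) • A *ᵥ v

section Skew

variable [CommRing R] {M : Matrix ι ι R}

theorem dotProduct_mulVec_of_transpose_eq_neg (hM : Mᵀ = -M) (v w : ι → R) :
    v ⬝ᵥ M *ᵥ w = -(M *ᵥ v ⬝ᵥ w) := by
  rw [dotProduct_mulVec, ← mulVec_transpose, hM, neg_mulVec, neg_dotProduct]

theorem mulVec_dotProduct_mulVec_self_of_transpose_eq_neg (hM : Mᵀ = -M) (v : ι → R) :
    M *ᵥ v ⬝ᵥ M *ᵥ v = -(v ⬝ᵥ M *ᵥ (M *ᵥ v)) := by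
  rw [dotProduct_mulVec_of_transpose_eq_neg hM v, neg_neg]

theorem dotProduct_mulVec_self_of_transpose_eq_neg [IsAddTorsionFree R] (hM : Mᵀ = -M)
    (v : ι → R) : v ⬝ᵥ M *ᵥ v = 0 := by
  have h := dotProduct_mulVec_of_transpose_eq_neg hM v v
  rw [dotProduct_comm (M *ᵥ v)] at h
  exact self_eq_neg.mp h

end Skew

theorem minResStep_dotProduct_self [Field K] (A : Matrix ι ι K) (v : ι → K) :
    A.minResStep v ⬝ᵥ A.minResStep v = v ⬝ᵥ v - (v ⬝ᵥ A *ᵥ v) ^ 2 / (A *ᵥ v ⬝ᵥ A *ᵥ v) := by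
  rw [minResStep]
  set w := A *ᵥ v
  by_cases hw : w ⬝ᵥ w = 0
  · simp [hw]
  simp only [sub_dotProduct, dotProduct_sub, smul_dotProduct, dotProduct_smul, smul_eq_mul,
    dotProduct_comm w v]
  field_simp
  ring

theorem minResStep_one_sub_dotProduct_self [Field K] [CharZero K] {M : Matrix ι ι K}
    [DecidableEq ι] (hM : Mᵀ = -M) (v : ι → K) :
    (1 - M).minResStep v ⬝ᵥ (1 - M).minResStep v =
      v ⬝ᵥ v - (v ⬝ᵥ v) ^ 2 / (v ⬝ᵥ v + M *ᵥ v ⬝ᵥ M *ᵥ v) := by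
  have hvMv := dotProduct_mulVec_self_of_transpose_eq_neg hM v
  have hMvv : M *ᵥ v ⬝ᵥ v = 0 := by rw [dotProduct_comm, hvMv]
  rw [minResStep_dotProduct_self, sub_mulVec, one_mulVec]
  simp only [dotProduct_sub, sub_dotProduct, hvMv, hMvv]
  ring_nf

theorem minResStep_mem [Field K] {A : Matrix ι ι K} {p : Submodule K (ι → K)}
    (hA : ∀ x ∈ p, A *ᵥ x ∈ p) {v : ι → K} (hv : v ∈ p) : A.minResStep v ∈ p :=
  p.sub_mem hv (p.smul_mem _ (hA v hv))

section Rotation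

variable [CommRing R] {M : Matrix ι ι R} {q₁ q₂ : ι → R} {m : R}

theorem mulVec_add_of_rotation (h₁ : M *ᵥ q₁ = m • q₂) (h₂ : M *ᵥ q₂ = -m • q₁) (c₁ c₂ : R) :
    M *ᵥ (c₁ • q₁ + c₂ • q₂) = (-(m * c₂)) • q₁ + (m * c₁) • q₂ := by
  rw [mulVec_add, mulVec_smul, mulVec_smul, h₁, h₂]
  module

theorem mulVec_mem_span_pair_of_rotation (h₁ : M *ᵥ q₁ = m • q₂) (h₂ : M *ᵥ q₂ = -m • q₁)
    {x : ι → R} (hx : x ∈ Submodule.span R {q₁, q₂}) : M *ᵥ x ∈ Submodule.span R {q₁, q₂} := by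
  obtain ⟨c₁, c₂, rfl⟩ := Submodule.mem_span_pair.mp hx
  exact Submodule.mem_span_pair.mpr ⟨_, _, (mulVec_add_of_rotation h₁ h₂ c₁ c₂).symm⟩

theorem mulVec_mulVec_of_rotation (h₁ : M *ᵥ q₁ = m • q₂) (h₂ : M *ᵥ q₂ = -m • q₁)
    {x : ι → R} (hx : x ∈ Submodule.span R {q₁, q₂}) : M *ᵥ (M *ᵥ x) = -m ^ 2 • x := by
  obtain ⟨c₁, c₂, rfl⟩ := Submodule.mem_span_pair.mp hx
  rw [mulVec_add_of_rotation h₁ h₂, mulVec_add_of_rotation h₁ h₂]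
  module

theorem mulVec_dotProduct_mulVec_self_of_rotation (hM : Mᵀ = -M) (h₁ : M *ᵥ q₁ = m • q₂)
    (h₂ : M *ᵥ q₂ = -m • q₁) {x : ι → R} (hx : x ∈ Submodule.span R {q₁, q₂}) :
    M *ᵥ x ⬝ᵥ M *ᵥ x = m ^ 2 * (x ⬝ᵥ x) := by
  rw [mulVec_dotProduct_mulVec_self_of_transpose_eq_neg hM, mulVec_mulVec_of_rotation h₁ h₂ hx,
    dotProduct_smul, smul_eq_mul, neg_mul, neg_neg]

end Rotation

theorem isStarNormal_map_ofReal (M : Matrix ι ι ℝ) [hM : IsStarNormal M] :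
    IsStarNormal (M.map Complex.ofReal) where
  star_comm_self := by
    have hconj : Function.Semiconj Complex.ofReal star star := fun x => (Complex.conj_ofReal x).symm
    have h := congrArg (Matrix.map · Complex.ofRealHom) hM.star_comm_self.eq
    simp only [Matrix.map_mul] at h
    rw [commute_iff_eq, star_eq_conjTranspose, ← conjTranspose_map _ hconj]
    exact h

theorem isStarNormal_of_transpose_eq_neg [CommRing R] [StarRing R] [TrivialStar R]
    {M : Matrix ι ι R} (hM : Mᵀ = -M) : IsStarNormal M where
  star_comm_self := by
    rw [star_eq_conjTranspose, conjTranspose_eq_transpose_of_trivial, hM]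
    exact (Commute.refl M).neg_left

theorem l2_opNorm_le_of_isStarNormal [DecidableEq ι] (N : Matrix ι ι ℂ) [IsStarNormal N] {r : ℝ}
    (hr : 0 ≤ r) (h : ∀ μ, Module.End.HasEigenvalue (toLin' N) μ → ‖μ‖ ≤ r) : ‖N‖ ≤ r := by
  have hspec : spectralRadius ℂ N ≤ ENNReal.ofReal r := by
    refine iSup₂_le fun μ hμ => ?_
    rw [← spectrum_toLin', ← Module.End.hasEigenvalue_iff_mem_spectrum] at hμ
    exact (ENNReal.le_ofReal_iff_toReal_le ENNReal.coe_ne_top hr).mpr (h μ hμ)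
  rw [IsStarNormal.spectralRadius_eq_nnnorm] at hspec
  exact (ENNReal.le_ofReal_iff_toReal_le ENNReal.coe_ne_top hr).mp hspec

theorem _root_.EuclideanSpace.norm_sq_toLp_ofReal (v : ι → ℝ) :
    ‖(WithLp.toLp 2 (fun i => (v i : ℂ)) : EuclideanSpace ℂ ι)‖ ^ 2 = v ⬝ᵥ v := by
  simp [EuclideanSpace.norm_sq_eq, dotProduct, ← sq]

theorem mulVec_dotProduct_mulVec_self_le [DecidableEq ι] (M : Matrix ι ι ℝ) {r : ℝ}
    (hM : ‖M.map Complex.ofReal‖ ≤ r) (v : ι → ℝ) : M *ᵥ v ⬝ᵥ M *ᵥ v ≤ r ^ 2 * (v ⬝ᵥ v) := by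
  have hMv : M.map Complex.ofReal *ᵥ (fun i => (v i : ℂ)) = fun i => ((M *ᵥ v) i : ℂ) :=
    funext fun i => (Complex.ofRealHom.map_mulVec M v i).symm
  have hx := l2_opNorm_mulVec (M.map Complex.ofReal) (WithLp.toLp 2 (fun i => (v i : ℂ)))
  simp only [EuclideanSpace.equiv, PiLp.continuousLinearEquiv_symm_apply, hMv] at hx
  rw [← EuclideanSpace.norm_sq_toLp_ofReal, ← EuclideanSpace.norm_sq_toLp_ofReal, ← mul_pow]
  gcongr
  exact hx.trans (by gcongr)

end Matrix

namespace Real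

theorem sub_sq_div_add_sq_mul (a m : ℝ) :
    a - a ^ 2 / (a + m ^ 2 * a) = m ^ 2 * a / (1 + m ^ 2) := by
  rcases eq_or_ne a 0 with rfl | ha
  · simp
  have : 1 + m ^ 2 ≠ 0 := by positivity
  field_simp
  ring

theorem sub_sq_div_add_le_of_le_sq_mul {a b r : ℝ} (ha : 0 ≤ a) (hb : 0 ≤ b)
    (h : b ≤ r ^ 2 * a) :
    a - a ^ 2 / (a + b) ≤ r ^ 2 * a / (1 + r ^ 2) := by
  rw [← sub_sq_div_add_sq_mul]
  rcases ha.eq_or_lt with rfl | ha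
  · simp
  gcongr

theorem sqrt_sq_mul_div_one_add_sq (r a : ℝ) :
    √(r ^ 2 * a / (1 + r ^ 2)) = |r| / √(1 + r ^ 2) * √a := by
  rw [sqrt_div' _ (by positivity), sqrt_mul (sq_nonneg r), sqrt_sq_eq_abs]
  ring

end Real

theorem stmt15 {n : ℕ} (M : Matrix (Fin n) (Fin n) ℝ) (hM : Mᵀ = -M)
    (A : Matrix (Fin n) (Fin n) ℝ) (hA : A = 1 - M)
    (mstar : ℝ)
    (hstar_bound : ∀ μ : ℂ,
      Module.End.HasEigenvalue (Matrix.toLin' (M.map (Complex.ofReal))) μ →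
        ‖μ‖ ≤ mstar)
    (hstar_mem : ∃ μ : ℂ,
      Module.End.HasEigenvalue (Matrix.toLin' (M.map (Complex.ofReal))) μ ∧
        ‖μ‖ = mstar)
    (α : (Fin n → ℝ) → ℝ)
    (hα : ∀ v, α v = v ⬝ᵥ A.mulVec v / (A.mulVec v ⬝ᵥ A.mulVec v))
    (Φ : (Fin n → ℝ) → (Fin n → ℝ))
    (hΦ : ∀ v, Φ v = v - α v • A.mulVec v) :
    (∀ v : Fin n → ℝ, v ≠ 0 →
      Real.sqrt (Φ v ⬝ᵥ Φ v) ≤ mstar / Real.sqrt (1 + mstar ^ 2) * Real.sqrt (v ⬝ᵥ v)) ∧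
    (∀ (q1 q2 : Fin n → ℝ) (m c1 c2 : ℝ) (q : Fin n → ℝ),
      q1 ⬝ᵥ q1 = 1 → q2 ⬝ᵥ q2 = 1 → q1 ⬝ᵥ q2 = 0 →
      M.mulVec q1 = m • q2 → M.mulVec q2 = -m • q1 →
      q = c1 • q1 + c2 • q2 → q ≠ 0 →
      (∃ d1 d2 : ℝ, Φ q = d1 • q1 + d2 • q2) ∧
      Real.sqrt (Φ q ⬝ᵥ Φ q) = |m| / Real.sqrt (1 + m ^ 2) * Real.sqrt (q ⬝ᵥ q)) := by
  have hr : 0 ≤ mstar := by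
    obtain ⟨μ, -, hμ⟩ := hstar_mem
    exact hμ ▸ norm_nonneg μ
  have := isStarNormal_of_transpose_eq_neg hM
  have := isStarNormal_map_ofReal M
  have hMv := M.mulVec_dotProduct_mulVec_self_le (l2_opNorm_le_of_isStarNormal _ hr hstar_bound)
  obtain rfl : Φ = (1 - M).minResStep := funext fun v => by rw [hΦ, hα, hA]; rfl
  refine ⟨fun v _ => ?_, fun q₁ q₂ m c₁ c₂ q _ _ _ h₁ h₂ hq _ => ?_⟩
  · have hsqrt := Real.sqrt_sq_mul_div_one_add_sq mstar (v ⬝ᵥ v)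
    rw [abs_of_nonneg hr] at hsqrt
    rw [minResStep_one_sub_dotProduct_self hM, ← hsqrt]
    exact Real.sqrt_le_sqrt <| Real.sub_sq_div_add_le_of_le_sq_mul
      (by simpa using dotProduct_star_self_nonneg v)
      (by simpa using dotProduct_star_self_nonneg (M *ᵥ v)) (hMv v)
  have hqspan : q ∈ Submodule.span ℝ {q₁, q₂} := Submodule.mem_span_pair.mpr ⟨c₁, c₂, hq.symm⟩
  constructor
  · have hinv : ∀ x ∈ Submodule.span ℝ {q₁, q₂}, (1 - M) *ᵥ x ∈ Submodule.span ℝ {q₁, q₂} :=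
      fun x hx => by
        rw [sub_mulVec, one_mulVec]
        exact Submodule.sub_mem _ hx (mulVec_mem_span_pair_of_rotation h₁ h₂ hx)
    obtain ⟨d₁, d₂, hd⟩ := Submodule.mem_span_pair.mp (minResStep_mem hinv hqspan)
    exact ⟨d₁, d₂, hd.symm⟩
  · rw [minResStep_one_sub_dotProduct_self hM,
      mulVec_dotProduct_mulVec_self_of_rotation hM h₁ h₂ hqspan, Real.sub_sq_div_add_sq_mul,
      Real.sqrt_sq_mul_div_one_add_sq]
end

section
/- Let M ∈ ℝ^{n×n} be skew-symmetric and A = I − M, and consider GMRES(1) residuals r_{k+1} = (I − α(r_k)A)r_k with α(v) = ⟨v,Av⟩/⟨Av,Av⟩. Then ‖r_k‖ ≤ (m*/√(1 + (m*)²))^k ‖r_0‖ for all k, where m* is the spectral radius of M; in particular GMRES(1) converges for every initial residual since m*/√(1 + (m*)²) < 1. -/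
open Matrix Filter

/-! For skew-symmetric `M` one has `⟨v, M v⟩ = 0`, so with `A = 1 - M` a GMRES(1) step sends `v`
to a residual of squared norm `‖v‖² ‖M v‖² / (‖v‖² + ‖M v‖²)`. The complexification of `M` is a
normal matrix, so its spectral norm equals its spectral radius `m*`; hence `‖M v‖ ≤ m* ‖v‖`, and
every step contracts the residual by the factor `m* / √(1 + m*²) < 1`. -/

variable {n : Type*} [Fintype n]

theorem EuclideanSpace.norm_toLp_ofReal_sq (v : n → ℝ) :
    ‖(WithLp.toLp 2 (fun i => (v i : ℂ)) : EuclideanSpace ℂ n)‖ ^ 2 = v ⬝ᵥ v := by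
  rw [EuclideanSpace.norm_sq_eq]
  simp [dotProduct, sq]

namespace Matrix

theorem dotProduct_mulVec_self_eq_zero {R : Type*} [CommRing R] [IsAddTorsionFree R]
    {M : Matrix n n R} (hM : Mᵀ = -M) (v : n → R) : v ⬝ᵥ M *ᵥ v = 0 := by
  refine self_eq_neg.mp ?_
  calc v ⬝ᵥ M *ᵥ v = (Mᵀ *ᵥ v) ⬝ᵥ v := by rw [dotProduct_mulVec, mulVec_transpose]
    _ = -(v ⬝ᵥ M *ᵥ v) := by rw [hM, neg_mulVec, neg_dotProduct, dotProduct_comm]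

theorem isStarNormal_map_ofReal_of_transpose_eq_neg {M : Matrix n n ℝ} (hM : Mᵀ = -M) :
    IsStarNormal (M.map Complex.ofReal) := by
  have hstar : star (M.map Complex.ofReal) = -M.map Complex.ofReal := by
    rw [star_eq_conjTranspose, ← conjTranspose_map _ (fun x => (Complex.conj_ofReal x).symm),
      conjTranspose_eq_transpose_of_trivial, hM, Matrix.map_neg _ Complex.ofReal_neg]
  exact ⟨hstar ▸ (Commute.refl _).neg_left⟩

section DecidableEq

variable [DecidableEq n]

theorem nonneg_of_forall_hasEigenvalue_norm_le [Nonempty n] {A : Matrix n n ℂ} {m : ℝ}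
    (h : ∀ μ, Module.End.HasEigenvalue (toLin' A) μ → ‖μ‖ ≤ m) : 0 ≤ m :=
  let ⟨μ, hμ⟩ := Module.End.exists_eigenvalue (toLin' A)
  (norm_nonneg μ).trans (h μ hμ)

section L2OpNorm

open scoped Matrix.Norms.L2Operator

theorem l2_opNorm_le_of_forall_hasEigenvalue {A : Matrix n n ℂ} [IsStarNormal A] {m : ℝ}
    (hm : 0 ≤ m) (h : ∀ μ, Module.End.HasEigenvalue (toLin' A) μ → ‖μ‖ ≤ m) : ‖A‖ ≤ m := by
  have hρ : spectralRadius ℂ A ≤ ENNReal.ofReal m := by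
    refine iSup₂_le fun μ hμ => ?_
    rw [← spectrum_toLin', ← Module.End.hasEigenvalue_iff_mem_spectrum] at hμ
    exact (ENNReal.le_ofReal_iff_toReal_le ENNReal.coe_ne_top hm).2 (h μ hμ)
  rw [IsStarNormal.spectralRadius_eq_nnnorm] at hρ
  exact (ENNReal.le_ofReal_iff_toReal_le ENNReal.coe_ne_top hm).1 hρ

theorem mulVec_dotProduct_self_le {M : Matrix n n ℝ} (hM : Mᵀ = -M) {m : ℝ} (hm : 0 ≤ m)
    (h : ∀ μ, Module.End.HasEigenvalue (toLin' (M.map Complex.ofReal)) μ → ‖μ‖ ≤ m)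
    (v : n → ℝ) : M *ᵥ v ⬝ᵥ M *ᵥ v ≤ m ^ 2 * (v ⬝ᵥ v) := by
  have := isStarNormal_map_ofReal_of_transpose_eq_neg hM
  have hMv : M.map Complex.ofReal *ᵥ (fun i => (v i : ℂ)) = fun i => ((M *ᵥ v) i : ℂ) :=
    funext fun i => (RingHom.map_mulVec Complex.ofRealHom M v i).symm
  have hnorm := (l2_opNorm_mulVec (M.map Complex.ofReal) (WithLp.toLp 2 fun i => (v i : ℂ))).trans
    (mul_le_mul_of_nonneg_right (l2_opNorm_le_of_forall_hasEigenvalue hm h) (norm_nonneg _))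
  rw [hMv] at hnorm
  rw [← EuclideanSpace.norm_toLp_ofReal_sq, ← EuclideanSpace.norm_toLp_ofReal_sq, ← mul_pow]
  exact pow_le_pow_left₀ (norm_nonneg _) hnorm 2

end L2OpNorm

end DecidableEq

end Matrix

theorem abs_div_sqrt_one_add_sq_lt_one (m : ℝ) : |m / √(1 + m ^ 2)| < 1 := by
  have hpos : 0 < √(1 + m ^ 2) := by positivity
  rw [abs_div, abs_of_pos hpos, div_lt_one hpos, ← Real.sqrt_sq_eq_abs]
  exact Real.sqrt_lt_sqrt (sq_nonneg m) (lt_one_add _)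

theorem tendsto_zero_of_tendsto_sqrt_dotProduct_self {ι : Type*} {l : Filter ι} {r : ι → n → ℝ}
    (h : Tendsto (fun k => √(r k ⬝ᵥ r k)) l (nhds 0)) : Tendsto r l (nhds 0) := by
  have hnorm : ∀ v : n → ℝ, ‖(WithLp.toLp 2 v : EuclideanSpace ℝ n)‖ = √(v ⬝ᵥ v) := by
    intro v
    simp [EuclideanSpace.norm_eq, dotProduct, sq]
  have : Tendsto (fun k => (WithLp.toLp 2 (r k) : EuclideanSpace ℝ n)) l (nhds 0) :=
    tendsto_zero_iff_norm_tendsto_zero.mpr (by simpa only [hnorm] using h)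
  exact ((PiLp.continuous_ofLp 2 _).tendsto 0).comp this

-- `α = ⟨v, A v⟩ / ⟨A v, A v⟩` minimises `‖v - α A v‖`.
noncomputable def gmres1Step (A : Matrix n n ℝ) (v : n → ℝ) : n → ℝ :=
  v - (v ⬝ᵥ A *ᵥ v / (A *ᵥ v ⬝ᵥ A *ᵥ v)) • A *ᵥ v

@[simp]
theorem gmres1Step_zero (A : Matrix n n ℝ) : gmres1Step A 0 = 0 := by
  simp [gmres1Step]

variable [DecidableEq n]

theorem gmres1Step_dotProduct_self {M : Matrix n n ℝ} (hM : Mᵀ = -M) (v : n → ℝ) :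
    gmres1Step (1 - M) v ⬝ᵥ gmres1Step (1 - M) v =
      (v ⬝ᵥ v) * (M *ᵥ v ⬝ᵥ M *ᵥ v) / (v ⬝ᵥ v + M *ᵥ v ⬝ᵥ M *ᵥ v) := by
  rcases eq_or_ne v 0 with rfl | hv
  · simp
  have hskew := dotProduct_mulVec_self_eq_zero hM v
  have hAv : (1 - M) *ᵥ v = v - M *ᵥ v := by rw [sub_mulVec, one_mulVec]
  have hvAv : v ⬝ᵥ (1 - M) *ᵥ v = v ⬝ᵥ v := by rw [hAv, dotProduct_sub, hskew, sub_zero]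
  have hAvv : (1 - M) *ᵥ v ⬝ᵥ v = v ⬝ᵥ v := by rw [dotProduct_comm, hvAv]
  have hAvAv : (1 - M) *ᵥ v ⬝ᵥ (1 - M) *ᵥ v = v ⬝ᵥ v + M *ᵥ v ⬝ᵥ M *ᵥ v := by
    rw [hAv, sub_dotProduct, dotProduct_sub, dotProduct_sub, dotProduct_comm (M *ᵥ v) v, hskew]
    ring
  have hne : v ⬝ᵥ v + M *ᵥ v ⬝ᵥ M *ᵥ v ≠ 0 := ne_of_gt <|
    add_pos_of_pos_of_nonneg (by simpa using dotProduct_self_star_pos_iff.mpr hv)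
      (by simpa using dotProduct_self_star_nonneg (M *ᵥ v))
  rw [gmres1Step, sub_dotProduct, dotProduct_sub, dotProduct_sub, smul_dotProduct, dotProduct_smul,
    smul_dotProduct, dotProduct_smul, hvAv, hAvv, hAvAv, smul_eq_mul, smul_eq_mul, smul_eq_mul]
  field_simp
  ring

theorem gmres1Step_dotProduct_self_le {M : Matrix n n ℝ} (hM : Mᵀ = -M) {m : ℝ}
    (hMv : ∀ v : n → ℝ, M *ᵥ v ⬝ᵥ M *ᵥ v ≤ m ^ 2 * (v ⬝ᵥ v)) (v : n → ℝ) :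
    gmres1Step (1 - M) v ⬝ᵥ gmres1Step (1 - M) v ≤ m ^ 2 / (1 + m ^ 2) * (v ⬝ᵥ v) := by
  rw [gmres1Step_dotProduct_self hM]
  rcases eq_or_ne v 0 with rfl | hv
  · simp
  have ha : 0 < v ⬝ᵥ v := by simpa using dotProduct_self_star_pos_iff.mpr hv
  have hb : 0 ≤ M *ᵥ v ⬝ᵥ M *ᵥ v := by simpa using dotProduct_self_star_nonneg (M *ᵥ v)
  rw [div_mul_eq_mul_div, div_le_div_iff₀ (by positivity) (by positivity)]
  nlinarith [hMv v]

theorem sqrt_gmres1Step_dotProduct_self_le {M : Matrix n n ℝ} (hM : Mᵀ = -M) {m : ℝ} (hm : 0 ≤ m)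
    (hMv : ∀ v : n → ℝ, M *ᵥ v ⬝ᵥ M *ᵥ v ≤ m ^ 2 * (v ⬝ᵥ v)) (v : n → ℝ) :
    √(gmres1Step (1 - M) v ⬝ᵥ gmres1Step (1 - M) v) ≤ m / √(1 + m ^ 2) * √(v ⬝ᵥ v) :=
  calc _ ≤ √(m ^ 2 / (1 + m ^ 2) * (v ⬝ᵥ v)) :=
        Real.sqrt_le_sqrt (gmres1Step_dotProduct_self_le hM hMv v)
    _ = m / √(1 + m ^ 2) * √(v ⬝ᵥ v) := by
        rw [Real.sqrt_mul (by positivity), Real.sqrt_div' _ (by positivity), Real.sqrt_sq hm]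

theorem stmt16_general {n : ℕ} (M : Matrix (Fin n) (Fin n) ℝ) (hM : Mᵀ = -M)
    (A : Matrix (Fin n) (Fin n) ℝ) (hA : A = 1 - M)
    (mstar : ℝ)
    (hstar_bound : ∀ μ : ℂ,
      Module.End.HasEigenvalue (Matrix.toLin' (M.map (Complex.ofReal))) μ →
        ‖μ‖ ≤ mstar)
    (r : ℕ → Fin n → ℝ)
    (hrec : ∀ k, r (k + 1) = if r k = 0 then 0 else
      r k - (r k ⬝ᵥ A.mulVec (r k) / (A.mulVec (r k) ⬝ᵥ A.mulVec (r k))) • A.mulVec (r k)) :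
    (∀ k, Real.sqrt (r k ⬝ᵥ r k)
        ≤ (mstar / Real.sqrt (1 + mstar ^ 2)) ^ k * Real.sqrt (r 0 ⬝ᵥ r 0)) ∧
    mstar / Real.sqrt (1 + mstar ^ 2) < 1 ∧
    Tendsto r atTop (nhds 0) := by
  set c := mstar / √(1 + mstar ^ 2)
  have hc : |c| < 1 := abs_div_sqrt_one_add_sq_lt_one mstar
  -- the `if` is redundant, since `0 / 0 = 0` makes `gmres1Step A 0 = 0`
  have hstep : ∀ k, r (k + 1) = gmres1Step A (r k) := fun k => by
    rw [hrec k]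
    split_ifs with h
    · simp [h]
    · rfl
  have hbound : ∀ k, √(r k ⬝ᵥ r k) ≤ c ^ k * √(r 0 ⬝ᵥ r 0) := by
    rcases isEmpty_or_nonempty (Fin n) with hn | hn
    · simp [Subsingleton.elim (r _) 0]
    have hm : 0 ≤ mstar := nonneg_of_forall_hasEigenvalue_norm_le hstar_bound
    have hMv := mulVec_dotProduct_self_le hM hm hstar_bound
    subst hA
    refine fun k => le_geom (u := fun k => √(r k ⬝ᵥ r k)) (by positivity) k fun j _ => ?_
    rw [hstep j]
    exact sqrt_gmres1Step_dotProduct_self_le hM hm hMv (r j)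
  refine ⟨hbound, (le_abs_self c).trans_lt hc, tendsto_zero_of_tendsto_sqrt_dotProduct_self ?_⟩
  refine squeeze_zero (fun k => Real.sqrt_nonneg _) hbound ?_
  simpa using (tendsto_pow_atTop_nhds_zero_of_abs_lt_one hc).mul_const √(r 0 ⬝ᵥ r 0)

theorem stmt16 {n : ℕ} (M : Matrix (Fin n) (Fin n) ℝ) (hM : Mᵀ = -M)
    (A : Matrix (Fin n) (Fin n) ℝ) (hA : A = 1 - M)
    (mstar : ℝ)
    (hstar_bound : ∀ μ : ℂ,
      Module.End.HasEigenvalue (Matrix.toLin' (M.map (Complex.ofReal))) μ →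
        ‖μ‖ ≤ mstar)
    (hstar_mem : ∃ μ : ℂ,
      Module.End.HasEigenvalue (Matrix.toLin' (M.map (Complex.ofReal))) μ ∧
        ‖μ‖ = mstar)
    (r : ℕ → Fin n → ℝ)
    (hrec : ∀ k, r (k + 1) = if r k = 0 then 0 else
      r k - (r k ⬝ᵥ A.mulVec (r k) / (A.mulVec (r k) ⬝ᵥ A.mulVec (r k))) • A.mulVec (r k)) :
    (∀ k, Real.sqrt (r k ⬝ᵥ r k)
        ≤ (mstar / Real.sqrt (1 + mstar ^ 2)) ^ k * Real.sqrt (r 0 ⬝ᵥ r 0)) ∧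
    mstar / Real.sqrt (1 + mstar ^ 2) < 1 ∧
    Tendsto r atTop (nhds 0) :=
  stmt16_general M hM A hA mstar hstar_bound r hrec
end

section
/- Let M ∈ ℝ^{n×n} be skew-symmetric and A = I − M. Then the symmetric part of A equals the identity: (A + Aᵀ)/2 = I, the symmetric part of A^{-1} equals (I + MMᵀ)^{-1}: (A^{-1} + A^{-T})/2 = (I + MMᵀ)^{-1}, and the smallest eigenvalue of (A^{-1} + A^{-T})/2 is 1/(1 + (m*)²) where m* is the spectral radius of M. -/
/-!
Since `M` is skew, `(1 - M) + (1 - M)ᵀ = 2` and `(1 - M)(1 - M)ᵀ = 1 - M² = 1 + M Mᵀ`, which is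
positive definite; so `A = 1 - M` is invertible and `A⁻¹ + A⁻ᵀ = A⁻ᵀ (A + Aᵀ) A⁻¹ = 2 (A Aᵀ)⁻¹`.
The complexification of `M Mᵀ = -M²` is positive semidefinite, so by spectral mapping every
eigenvalue `z` of `M` satisfies `-z² = ‖z‖²`; hence the eigenvalues of `(1 + M Mᵀ)⁻¹` are exactly
the numbers `1 / (1 + ‖z‖²)`.
-/

open Matrix

variable {n : Type*} [Fintype n] [DecidableEq n]

namespace Matrix

theorem inv_two_smul_one_sub_add_transpose {m K : Type*} [DecidableEq m] [Field K]
    [NeZero (2 : K)] {M : Matrix m m K} (hM : Mᵀ = -M) : (2⁻¹ : K) • ((1 - M) + (1 - M)ᵀ) = 1 := by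
  rw [transpose_sub, transpose_one, hM, sub_neg_eq_add, sub_add_add_cancel, ← two_smul K,
    smul_smul, inv_mul_cancel₀ two_ne_zero, one_smul]

theorem one_sub_mul_transpose_one_sub {R : Type*} [CommRing R] {M : Matrix n n R}
    (hM : Mᵀ = -M) : (1 - M) * (1 - M)ᵀ = 1 + M * Mᵀ := by
  rw [transpose_sub, transpose_one, hM]
  noncomm_ring

theorem smul_inv_add_transpose_inv {R : Type*} [CommRing R] (c : R) {A : Matrix n n R}
    (hA : IsUnit A.det) (h : c • (A + Aᵀ) = 1) : c • (A⁻¹ + (A⁻¹)ᵀ) = (A * Aᵀ)⁻¹ := by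
  have hAT : IsUnit Aᵀ.det := by rwa [det_transpose]
  calc c • (A⁻¹ + (A⁻¹)ᵀ) = (Aᵀ)⁻¹ * (c • (A + Aᵀ)) * A⁻¹ := by
        rw [transpose_nonsing_inv, Matrix.mul_smul, Matrix.smul_mul, mul_add, add_mul,
          nonsing_inv_mul _ hAT, one_mul, mul_assoc, mul_nonsing_inv _ hA, mul_one, add_comm]
    _ = (A * Aᵀ)⁻¹ := by rw [h, mul_one, mul_inv_rev]

theorem det_one_add_mul_transpose_pos (M : Matrix n n ℝ) : 0 < (1 + M * Mᵀ).det := by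
  have hpsd : (M * Mᵀ).PosSemidef := by
    simpa only [conjTranspose_eq_transpose_of_trivial] using posSemidef_self_mul_conjTranspose M
  exact (PosDef.one.add_posSemidef hpsd).det_pos

theorem isUnit_det_one_sub_of_transpose_eq_neg {M : Matrix n n ℝ} (hM : Mᵀ = -M) :
    IsUnit (1 - M).det := by
  have h := det_one_add_mul_transpose_pos M
  rw [← one_sub_mul_transpose_one_sub hM, det_mul] at h
  exact (left_ne_zero_of_mul h.ne').isUnit

theorem hasEigenvalue_toLin'_iff {K : Type*} [Field K] (B : Matrix n n K) (μ : K) :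
    Module.End.HasEigenvalue B.toLin' μ ↔ μ ∈ spectrum K B := by
  rw [Module.End.hasEigenvalue_iff_mem_spectrum, spectrum_toLin']

theorem mem_spectrum_map_iff {K L : Type*} [Field K] [Field L] (f : K →+* L) (B : Matrix n n K)
    (r : K) : f r ∈ spectrum L (B.map f) ↔ r ∈ spectrum K B := by
  rw [mem_spectrum_iff_isRoot_charpoly, mem_spectrum_iff_isRoot_charpoly, charpoly_map]
  exact Polynomial.isRoot_map_iff f.injective

theorem conjTranspose_map_ofReal {l m : Type*} (B : Matrix l m ℝ) :
    (B.map Complex.ofReal)ᴴ = Bᵀ.map Complex.ofReal := by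
  rw [← conjTranspose_eq_transpose_of_trivial,
    conjTranspose_map _ fun x => (Complex.conj_ofReal x).symm]

open ComplexOrder in
theorem spectrum_mul_conjTranspose_of_conjTranspose_eq_neg {N : Matrix n n ℂ} (hN : Nᴴ = -N) :
    spectrum ℂ (N * Nᴴ) = (fun z : ℂ => ((‖z‖ ^ 2 : ℝ) : ℂ)) '' spectrum ℂ N := by
  have hmap : spectrum ℂ (N * Nᴴ) = (fun z : ℂ => -z ^ 2) '' spectrum ℂ N := by
    have hpoly : N * Nᴴ = Polynomial.aeval N (-Polynomial.X ^ 2 : Polynomial ℂ) := by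
      simp [hN, sq]
    rw [hpoly, spectrum.map_polynomial_aeval_of_degree_pos _ _
      (by rw [Polynomial.degree_neg, Polynomial.degree_X_pow]; norm_num)]
    simp
  rw [hmap]
  refine Set.image_congr fun z hz => ?_
  have hnonneg : 0 ≤ -z ^ 2 :=
    (posSemidef_iff_isHermitian_and_spectrum_nonneg.mp (posSemidef_self_mul_conjTranspose N)).2
      (hmap ▸ Set.mem_image_of_mem _ hz)
  rw [← Complex.norm_of_nonneg' hnonneg, norm_neg, norm_pow]

theorem mem_spectrum_mul_transpose_iff_of_transpose_eq_neg {M : Matrix n n ℝ} (hM : Mᵀ = -M)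
    (r : ℝ) :
    r ∈ spectrum ℝ (M * Mᵀ) ↔ ∃ z ∈ spectrum ℂ (M.map Complex.ofReal), ‖z‖ ^ 2 = r := by
  have hskew : (M.map Complex.ofReal)ᴴ = -M.map Complex.ofReal := by
    rw [conjTranspose_map_ofReal, hM, Matrix.map_neg _ Complex.ofReal_neg]
  have hmul : (M * Mᵀ).map Complex.ofRealHom =
      M.map Complex.ofReal * (M.map Complex.ofReal)ᴴ := by
    rw [conjTranspose_map_ofReal, Matrix.map_mul]
    rfl
  rw [← mem_spectrum_map_iff Complex.ofRealHom, hmul,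
    spectrum_mul_conjTranspose_of_conjTranspose_eq_neg hskew]
  simp only [Set.mem_image, Complex.ofRealHom_eq_coe, Complex.ofReal_inj]

theorem spectrum_inv_one_add_mul_transpose_of_transpose_eq_neg {M : Matrix n n ℝ}
    (hM : Mᵀ = -M) :
    spectrum ℝ (1 + M * Mᵀ)⁻¹ =
      (fun z : ℂ => (1 + ‖z‖ ^ 2)⁻¹) '' spectrum ℂ (M.map Complex.ofReal) := by
  ext μ
  set u := nonsingInvUnit (1 + M * Mᵀ) (det_one_add_mul_transpose_pos M).ne'.isUnit
  have hinv : (1 + M * Mᵀ)⁻¹ = ↑u⁻¹ := (coe_units_inv u).symm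
  have hu : (u : Matrix n n ℝ) = algebraMap ℝ _ 1 + M * Mᵀ := by
    rw [map_one]
    rfl
  rw [hinv, ← spectrum.inv₀_mem_iff, hu, ← sub_add_cancel μ⁻¹ 1, spectrum.add_mem_add_iff,
    mem_spectrum_mul_transpose_iff_of_transpose_eq_neg hM, Set.mem_image]
  refine exists_congr fun z => and_congr_right fun _ => ?_
  rw [eq_sub_iff_add_eq, add_comm, eq_comm, inv_eq_iff_eq_inv]
  exact eq_comm

end Matrix

theorem stmt17_general {n : ℕ} (M : Matrix (Fin n) (Fin n) ℝ) (hM : Mᵀ = -M)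
    (A : Matrix (Fin n) (Fin n) ℝ) (hA : A = 1 - M)
    (mstar : ℝ)
    (hstar_bound : ∀ μ : ℂ,
      Module.End.HasEigenvalue (Matrix.toLin' (M.map (Complex.ofReal))) μ →
        ‖μ‖ ≤ mstar)
    (hstar_mem : ∃ μ : ℂ,
      Module.End.HasEigenvalue (Matrix.toLin' (M.map (Complex.ofReal))) μ ∧
        ‖μ‖ = mstar) :
    (2⁻¹ : ℝ) • (A + Aᵀ) = 1 ∧
    (2⁻¹ : ℝ) • (A⁻¹ + (A⁻¹)ᵀ) = (1 + M * Mᵀ)⁻¹ ∧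
    (∀ μ : ℝ,
      Module.End.HasEigenvalue (Matrix.toLin' ((2⁻¹ : ℝ) • (A⁻¹ + (A⁻¹)ᵀ))) μ →
        1 / (1 + mstar ^ 2) ≤ μ) ∧
    Module.End.HasEigenvalue (Matrix.toLin' ((2⁻¹ : ℝ) • (A⁻¹ + (A⁻¹)ᵀ)))
      (1 / (1 + mstar ^ 2)) := by
  subst hA
  have hsymm := inv_two_smul_one_sub_add_transpose hM
  have hinv : (2⁻¹ : ℝ) • ((1 - M)⁻¹ + ((1 - M)⁻¹)ᵀ) = (1 + M * Mᵀ)⁻¹ := by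
    rw [smul_inv_add_transpose_inv _ (isUnit_det_one_sub_of_transpose_eq_neg hM) hsymm,
      one_sub_mul_transpose_one_sub hM]
  have hspec : ∀ μ : ℝ,
      Module.End.HasEigenvalue (toLin' ((2⁻¹ : ℝ) • ((1 - M)⁻¹ + ((1 - M)⁻¹)ᵀ))) μ ↔
        ∃ z ∈ spectrum ℂ (M.map Complex.ofReal), (1 + ‖z‖ ^ 2)⁻¹ = μ := fun μ => by
    rw [hinv, hasEigenvalue_toLin'_iff, spectrum_inv_one_add_mul_transpose_of_transpose_eq_neg hM,
      Set.mem_image]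
  obtain ⟨z₀, hz₀, rfl⟩ := hstar_mem
  refine ⟨hsymm, hinv, fun μ hμ => ?_, (hspec _).2 ⟨z₀, (hasEigenvalue_toLin'_iff _ _).1 hz₀,
    (one_div _).symm⟩⟩
  obtain ⟨z, hz, rfl⟩ := (hspec μ).1 hμ
  rw [one_div]
  gcongr
  exact hstar_bound z ((hasEigenvalue_toLin'_iff _ _).2 hz)

theorem stmt17 {n : ℕ} (M : Matrix (Fin n) (Fin n) ℝ) (hM : Mᵀ = -M)
    (A : Matrix (Fin n) (Fin n) ℝ) (hA : A = 1 - M) (hAinv : IsUnit A.det)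
    (mstar : ℝ)
    (hstar_bound : ∀ μ : ℂ,
      Module.End.HasEigenvalue (Matrix.toLin' (M.map (Complex.ofReal))) μ →
        ‖μ‖ ≤ mstar)
    (hstar_mem : ∃ μ : ℂ,
      Module.End.HasEigenvalue (Matrix.toLin' (M.map (Complex.ofReal))) μ ∧
        ‖μ‖ = mstar) :
    (2⁻¹ : ℝ) • (A + Aᵀ) = 1 ∧
    (2⁻¹ : ℝ) • (A⁻¹ + (A⁻¹)ᵀ) = (1 + M * Mᵀ)⁻¹ ∧
    (∀ μ : ℝ,
      Module.End.HasEigenvalue (Matrix.toLin' ((2⁻¹ : ℝ) • (A⁻¹ + (A⁻¹)ᵀ))) μ →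
        1 / (1 + mstar ^ 2) ≤ μ) ∧
    Module.End.HasEigenvalue (Matrix.toLin' ((2⁻¹ : ℝ) • (A⁻¹ + (A⁻¹)ᵀ)))
      (1 / (1 + mstar ^ 2)) :=
  stmt17_general M hM A hA mstar hstar_bound hstar_mem
end
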